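/- Let Ω ⊂ ℝ² be a bounded measurable set and k ∈ ℝ² with k ≠ 0. Then for the complex geometric optics functions φ₁, φ₂ for k, ∫_Ω ∇φ₁(x;k) · ∇φ₂(x;k) dx = −2π²|k|² ∫_Ω e^{2πi k·x} dx; that is, the left-hand side equals −2π²|k|² times the Fourier transform χ̂_Ω(k) = ∫_Ω e^{2πi k·x} dx of the characteristic function of Ω. -/

import Mathlib

open Real Complex MeasureTheory

/-- First partial derivative `∂₁ f` of `f : ℝ² → ℂ`. -/
noncomputable def pd1 (f : ℝ × ℝ → ℂ) (x : ℝ × ℝ) : ℂ := fderiv ℝ f x (1, 0)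

/-- Second partial derivative `∂₂ f` of `f : ℝ² → ℂ`. -/
noncomputable def pd2 (f : ℝ × ℝ → ℂ) (x : ℝ × ℝ) : ℂ := fderiv ℝ f x (0, 1)

/-- The bilinear (non-conjugated) dot product of gradients:
`∇u · ∇v = ∂₁u ∂₁v + ∂₂u ∂₂v`. -/
noncomputable def gdot (u v : ℝ × ℝ → ℂ) (x : ℝ × ℝ) : ℂ :=
  pd1 u x * pd1 v x + pd2 u x * pd2 v x

/-- The complex geometric optics function `φ₁(x;k) = exp(πi k·x + π k⊥·x)`,
with `k⊥ = (-k₂,k₁)`. -/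
noncomputable def cgo1 (k : ℝ × ℝ) (x : ℝ × ℝ) : ℂ :=
  Complex.exp ((Real.pi : ℂ) * Complex.I * ((k.1 : ℂ) * x.1 + (k.2 : ℂ) * x.2) +
    (Real.pi : ℂ) * ((-(k.2 : ℂ)) * x.1 + (k.1 : ℂ) * x.2))

/-- The complex geometric optics function `φ₂(x;k) = exp(πi k·x − π k⊥·x)`. -/
noncomputable def cgo2 (k : ℝ × ℝ) (x : ℝ × ℝ) : ℂ :=
  Complex.exp ((Real.pi : ℂ) * Complex.I * ((k.1 : ℂ) * x.1 + (k.2 : ℂ) * x.2) -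
    (Real.pi : ℂ) * ((-(k.2 : ℂ)) * x.1 + (k.1 : ℂ) * x.2))

/-! Both functions are exponentials of complex linear forms, `φⱼ = exp (aⱼ x₁ + bⱼ x₂)`, so
`∇φ₁ · ∇φ₂ = (a₁a₂ + b₁b₂) φ₁φ₂` pointwise. The real parts of the coefficients cancel in
`φ₁φ₂ = e^{2πik·x}`, and `a₁a₂ + b₁b₂ = π²(i²|k|² - |k⊥|²) = -2π²|k|²`. Integrating the pointwise
identity over `Ω` gives the claim. -/

noncomputable def expLin (a b : ℂ) (x : ℝ × ℝ) : ℂ :=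
  Complex.exp (a * x.1 + b * x.2)

lemma hasFDerivAt_expLin (a b : ℂ) (x : ℝ × ℝ) :
    HasFDerivAt (expLin a b)
      (expLin a b x • (a • (ofRealCLM.comp (ContinuousLinearMap.fst ℝ ℝ ℝ)) +
        b • (ofRealCLM.comp (ContinuousLinearMap.snd ℝ ℝ ℝ)))) x := by
  have hfst := ofRealCLM.hasFDerivAt.comp x (ContinuousLinearMap.fst ℝ ℝ ℝ).hasFDerivAt
  have hsnd := ofRealCLM.hasFDerivAt.comp x (ContinuousLinearMap.snd ℝ ℝ ℝ).hasFDerivAt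
  exact ((hfst.const_mul a).add (hsnd.const_mul b)).cexp

lemma pd1_expLin (a b : ℂ) (x : ℝ × ℝ) : pd1 (expLin a b) x = a * expLin a b x := by
  simp [pd1, (hasFDerivAt_expLin a b x).fderiv, mul_comm]

lemma pd2_expLin (a b : ℂ) (x : ℝ × ℝ) : pd2 (expLin a b) x = b * expLin a b x := by
  simp [pd2, (hasFDerivAt_expLin a b x).fderiv, mul_comm]

lemma gdot_expLin (a₁ b₁ a₂ b₂ : ℂ) (x : ℝ × ℝ) :
    gdot (expLin a₁ b₁) (expLin a₂ b₂) x = (a₁ * a₂ + b₁ * b₂) * expLin (a₁ + a₂) (b₁ + b₂) x := by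
  have hmul : expLin a₁ b₁ x * expLin a₂ b₂ x = expLin (a₁ + a₂) (b₁ + b₂) x := by
    rw [expLin, expLin, expLin, ← Complex.exp_add]
    ring_nf
  rw [gdot, pd1_expLin, pd2_expLin, pd1_expLin, pd2_expLin, ← hmul]
  ring

lemma cgo1_eq_expLin (k : ℝ × ℝ) :
    cgo1 k = expLin (π * I * k.1 - π * k.2) (π * I * k.2 + π * k.1) := by
  funext x
  rw [cgo1, expLin]
  ring_nf

lemma cgo2_eq_expLin (k : ℝ × ℝ) :
    cgo2 k = expLin (π * I * k.1 + π * k.2) (π * I * k.2 - π * k.1) := by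
  funext x
  rw [cgo2, expLin]
  ring_nf

lemma gdot_cgo1_cgo2 (k : ℝ × ℝ) (x : ℝ × ℝ) :
    gdot (cgo1 k) (cgo2 k) x =
      -2 * (π : ℂ) ^ 2 * ((k.1 : ℂ) ^ 2 + (k.2 : ℂ) ^ 2) *
        Complex.exp (2 * (π : ℂ) * I * ((k.1 : ℂ) * x.1 + (k.2 : ℂ) * x.2)) := by
  rw [cgo1_eq_expLin, cgo2_eq_expLin, gdot_expLin, expLin]
  congr 2
  · linear_combination ((π : ℂ) ^ 2 * ((k.1 : ℂ) ^ 2 + (k.2 : ℂ) ^ 2)) * I_sq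
  · ring

theorem calderon_identity_background_general (Ω : Set (ℝ × ℝ)) (k : ℝ × ℝ) :
    ∫ x in Ω, gdot (cgo1 k) (cgo2 k) x =
      -2 * (Real.pi : ℂ) ^ 2 * ((k.1 : ℂ) ^ 2 + (k.2 : ℂ) ^ 2) *
        ∫ x in Ω, Complex.exp (2 * (Real.pi : ℂ) * Complex.I *
          ((k.1 : ℂ) * x.1 + (k.2 : ℂ) * x.2)) := by
  simp only [gdot_cgo1_cgo2]
  exact integral_const_mul _ _

/-- For a bounded measurable `Ω ⊂ ℝ²` and `k ≠ 0`,
`∫_Ω ∇φ₁(x;k) · ∇φ₂(x;k) dx = −2π²|k|² ∫_Ω e^{2πik·x} dx`, i.e. `−2π²|k|²` times the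
Fourier transform of the characteristic function of `Ω`. -/
theorem calderon_identity_background (Ω : Set (ℝ × ℝ)) (hΩb : Bornology.IsBounded Ω)
    (hΩm : MeasurableSet Ω) (k : ℝ × ℝ) (hk : k ≠ 0) :
    ∫ x in Ω, gdot (cgo1 k) (cgo2 k) x =
      -2 * (Real.pi : ℂ) ^ 2 * ((k.1 : ℂ) ^ 2 + (k.2 : ℂ) ^ 2) *
        ∫ x in Ω, Complex.exp (2 * (Real.pi : ℂ) * Complex.I *
          ((k.1 : ℂ) * x.1 + (k.2 : ℂ) * x.2)) :=
  calderon_identity_background_general Ω k
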